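/- arXiv:2112.13799 — 3 statements merged into one kernel-verified Lean document; each statement's English description precedes it below -/
import Mathlib

section
/- Let j be a positive integer. If F ∈ L^{2j} is a majorant of an integrable function f, then f ∈ L^{2j} and ‖f‖_{2j} ≤ ‖F‖_{2j}. -/
open MeasureTheory Complex
open scoped Real ENNReal

noncomputable section

instance : Fact (0 < 2 * Real.pi) := ⟨by positivity⟩

abbrev Circle2Pi := AddCircle (2 * Real.pi)

abbrev circleMeasure : Measure Circle2Pi := AddCircle.haarAddCircle

/-- `F` is a majorant of `f`. -/
def IsMajorant (F f : Circle2Pi → ℂ) : Prop :=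
  ∀ n : ℤ, (fourierCoeff F n).im = 0 ∧ ‖fourierCoeff f n‖ ≤ (fourierCoeff F n).re

/-!
For `L²` functions the Fourier coefficients of a product are the convolution of the coefficients
(Parseval), and a convolution of nonnegative dominating sequences dominates the convolution; so
majorization passes to products, and `F ^ j` majorizes `f ^ j`. Coefficientwise domination in
absolute value then gives `‖f ^ j‖₂ ≤ ‖F ^ j‖₂` by Parseval, which is `‖f‖_{2j} ^ j ≤ ‖F‖_{2j} ^ j`.

That `f ^ k ∈ L²` is bootstrapped along the way: `f ^ k = f ^ (k - 1) * f` is integrable, its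
coefficients are dominated by those of `F ^ k ∈ L²`, and an integrable function with
square-summable coefficients lies in `L²`, since integrable functions are determined by their
Fourier coefficients.
-/

open Filter Topology ComplexConjugate BoundedContinuousFunction

section TestFunctions

variable {X : Type*} [TopologicalSpace X] [HasOuterApproxClosed X] [MeasurableSpace X]
  [BorelSpace X] {μ : Measure X}

/-- Continuous functions `X → [0,1]` converging to the indicator of a closed set reduce the claim
to `ae_eq_zero_of_forall_setIntegral_isClosed_eq_zero`, by dominated convergence. -/
theorem ae_eq_zero_of_forall_integral_mul_eq_zero {h : X → ℂ} (hh : Integrable h μ)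
    (H : ∀ g : X →ᵇ NNReal, ∫ x, ((g x : ℝ) : ℂ) * h x ∂μ = 0) : h =ᵐ[μ] 0 := by
  refine ae_eq_zero_of_forall_setIntegral_isClosed_eq_zero hh fun s hs => ?_
  have hlim : Tendsto (fun n => ∫ x, ((hs.apprSeq n x : ℝ) : ℂ) * h x ∂μ) atTop
      (𝓝 (∫ x, s.indicator h x ∂μ)) := by
    refine tendsto_integral_of_dominated_convergence (fun x => ‖h x‖)
      (fun n => ?_) hh.norm (fun n => ae_of_all _ fun x => ?_) (ae_of_all _ fun x => ?_)
    · exact (Complex.continuous_ofReal.comp (NNReal.continuous_coe.comp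
        (hs.apprSeq n).continuous)).aestronglyMeasurable.mul hh.aestronglyMeasurable
    · rw [norm_mul, Complex.norm_real, Real.norm_eq_abs, NNReal.abs_eq]
      exact mul_le_of_le_one_left (norm_nonneg _)
        (by exact_mod_cast HasOuterApproxClosed.apprSeq_apply_le_one hs n x)
    · have hx := tendsto_pi_nhds.1 (HasOuterApproxClosed.tendsto_apprSeq hs) x
      have hindicator :
          s.indicator h x = (((s.indicator (fun _ => 1) x : NNReal) : ℝ) : ℂ) * h x := by
        by_cases hxs : x ∈ s <;> simp [hxs]
      rw [hindicator]
      exact (((Complex.continuous_ofReal.comp NNReal.continuous_coe).tendsto _).comp hx).mul_const _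
  rw [← integral_indicator hs.measurableSet]
  exact tendsto_nhds_unique hlim (by simp only [H, tendsto_const_nhds])

end TestFunctions

section FourierCoefficients

open AddCircle

variable {T : ℝ} [Fact (0 < T)]

theorem fourierCoeff_sub {f g : AddCircle T → ℂ} (hf : Integrable f haarAddCircle)
    (hg : Integrable g haarAddCircle) (n : ℤ) :
    fourierCoeff (f - g) n = fourierCoeff f n - fourierCoeff g n := by
  simp only [fourierCoeff.eq_1, Pi.sub_apply, smul_sub]
  exact integral_sub (hf.fourier_smul _) (hg.fourier_smul _)

theorem fourierCoeff_conj (g : AddCircle T → ℂ) (n : ℤ) :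
    fourierCoeff (fun t => conj (g t)) n = conj (fourierCoeff g (-n)) := by
  simp only [fourierCoeff.eq_1, ← integral_conj, smul_eq_mul, map_mul, fourier_neg, neg_neg]

theorem fourierCoeff_fourier_mul (g : AddCircle T → ℂ) (m n : ℤ) :
    fourierCoeff (fun t => fourier m t * g t) n = fourierCoeff g (n - m) := by
  have hindex : -n + m = -(n - m) := by ring
  simp only [fourierCoeff.eq_1, smul_eq_mul, ← mul_assoc, ← fourier_add, hindex]

theorem integral_mul_eq_zero_of_fourierCoeff_eq_zero {h : AddCircle T → ℂ}
    (hh : Integrable h haarAddCircle) (hcoeff : ∀ n, fourierCoeff h n = 0)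
    (g : C(AddCircle T, ℂ)) : ∫ x, g x * h x ∂haarAddCircle = 0 := by
  have hint (g : C(AddCircle T, ℂ)) : Integrable (fun x => g x * h x) haarAddCircle :=
    hh.bdd_mul g.continuous.aestronglyMeasurable (ae_of_all _ g.norm_coe_le_norm)
  let L : C(AddCircle T, ℂ) →L[ℂ] ℂ := LinearMap.mkContinuous
    { toFun := fun g => ∫ x, g x * h x ∂haarAddCircle
      map_add' := fun g₁ g₂ => by
        simp only [ContinuousMap.add_apply, add_mul]
        exact integral_add (hint g₁) (hint g₂)
      map_smul' := fun c g => by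
        simp only [ContinuousMap.smul_apply, smul_eq_mul, mul_assoc, RingHom.id_apply]
        exact integral_const_mul c _ }
    (∫ x, ‖h x‖ ∂haarAddCircle) fun g => by
      refine (norm_integral_le_integral_norm _).trans ?_
      rw [← integral_mul_const]
      refine integral_mono (hint g).norm (hh.norm.mul_const _) fun x => ?_
      rw [norm_mul, mul_comm]
      exact mul_le_mul_of_nonneg_left (g.norm_coe_le_norm x) (norm_nonneg _)
  have hfourier : ∀ n, L (fourier n) = 0 := fun n => by
    simpa [L, fourierCoeff.eq_1] using hcoeff (-n)
  have hspan : Submodule.span ℂ (Set.range fourier) ≤ L.ker :=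
    Submodule.span_le.2 (Set.range_subset_iff.2 hfourier)
  have htop := Submodule.topologicalClosure_minimal _ hspan L.isClosed_ker
  rw [span_fourier_closure_eq_top] at htop
  exact htop Submodule.mem_top

theorem ae_eq_zero_of_fourierCoeff_eq_zero {h : AddCircle T → ℂ}
    (hh : Integrable h haarAddCircle) (hcoeff : ∀ n, fourierCoeff h n = 0) :
    h =ᵐ[haarAddCircle] 0 :=
  ae_eq_zero_of_forall_integral_mul_eq_zero hh fun g =>
    integral_mul_eq_zero_of_fourierCoeff_eq_zero hh hcoeff
      ⟨fun x => ((g x : ℝ) : ℂ), by fun_prop⟩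

theorem MeasureTheory.MemLp.hasSum_sq_norm_fourierCoeff {u : AddCircle T → ℂ}
    (hu : MemLp u 2 AddCircle.haarAddCircle) :
    HasSum (fun n => ‖fourierCoeff u n‖ ^ 2)
      ((eLpNorm u 2 AddCircle.haarAddCircle).toReal ^ 2) := by
  have := lp.hasSum_norm (p := 2) (by norm_num) (fourierBasis.repr (hu.toLp u))
  simpa [fourierBasis_repr, fourierCoeff_congr_ae hu.coeFn_toLp, Lp.norm_toLp] using this

theorem memLp_two_of_summable_sq_norm_fourierCoeff {f : AddCircle T → ℂ}
    (hf : Integrable f haarAddCircle) (hsum : Summable fun n => ‖fourierCoeff f n‖ ^ 2) :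
    MemLp f 2 haarAddCircle := by
  let c : lp (fun _ : ℤ => ℂ) 2 := ⟨fourierCoeff f, memℓp_gen (by simpa using hsum)⟩
  let g : Lp ℂ 2 (haarAddCircle (T := T)) := fourierBasis.repr.symm c
  have hcoeff : fourierCoeff g = fourierCoeff f := by
    ext n
    rw [← fourierBasis_repr, LinearIsometryEquiv.apply_symm_apply]
  have hg : Integrable (⇑g) haarAddCircle := (Lp.memLp g).integrable one_le_two
  have hfg : f - ⇑g =ᵐ[haarAddCircle] 0 :=
    ae_eq_zero_of_fourierCoeff_eq_zero (hf.sub hg) fun n => by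
      rw [fourierCoeff_sub hf hg, hcoeff, sub_self]
  exact (Lp.memLp g).ae_eq ((sub_ae_eq_zero _ _).1 hfg).symm

/-- The `n`-th coefficient of `u * v` is `⟪conj (fourier (-n) * u), v⟫`, which Parseval expands
in the Fourier basis. -/
theorem hasSum_fourierCoeff_mul {u v : AddCircle T → ℂ} (hu : MemLp u 2 haarAddCircle)
    (hv : MemLp v 2 haarAddCircle) (n : ℤ) :
    HasSum (fun m => fourierCoeff u (n - m) * fourierCoeff v m) (fourierCoeff (u * v) n) := by
  set w : AddCircle T → ℂ := fun t => conj (fourier (-n) t * u t)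
  have hw : MemLp w 2 haarAddCircle :=
    hu.congr_norm (continuous_conj.comp_aestronglyMeasurable
      ((fourier (-n)).continuous.aestronglyMeasurable.mul hu.1))
      (ae_of_all _ fun t => by simp [w, Circle.norm_coe])
  have hwu : ∀ m, inner ℂ (hw.toLp w) (fourierBasis m) = fourierCoeff u (n - m) := fun m => by
    rw [← inner_conj_symm, ← fourierBasis.repr_apply_apply, fourierBasis_repr,
      fourierCoeff_congr_ae hw.coeFn_toLp, fourierCoeff_conj, fourierCoeff_fourier_mul,
      Complex.conj_conj]
    congr 1
    ring
  have hv' : ∀ m, inner ℂ (fourierBasis m) (hv.toLp v) = fourierCoeff v m := fun m => by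
    rw [← fourierBasis.repr_apply_apply, fourierBasis_repr, fourierCoeff_congr_ae hv.coeFn_toLp]
  have huv : inner ℂ (hw.toLp w) (hv.toLp v) = fourierCoeff (u * v) n := by
    rw [L2.inner_def, fourierCoeff.eq_1]
    refine integral_congr_ae ?_
    filter_upwards [hw.coeFn_toLp, hv.coeFn_toLp] with t hwt hvt
    simp only [RCLike.inner_apply, hwt, hvt, w, Complex.conj_conj, Pi.mul_apply, smul_eq_mul]
    ring
  simpa only [hwu, hv', huv] using fourierBasis.hasSum_inner_mul_inner (hw.toLp w) (hv.toLp v)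

end FourierCoefficients

section PowNorm

variable {α 𝕜 : Type*} [MeasurableSpace α] {μ : Measure α} [NormedDivisionRing 𝕜]

theorem eLpNorm_pow (f : α → 𝕜) (p : ℝ≥0∞) {k : ℕ} (hk : k ≠ 0) :
    eLpNorm (f ^ k) p μ = eLpNorm f (p * k) μ ^ k := by
  have hnorm : eLpNorm (f ^ k) p μ = eLpNorm (fun x => ‖f x‖ ^ (k : ℝ)) p μ :=
    eLpNorm_congr_norm_ae (ae_of_all _ fun x => by
      rw [Pi.pow_apply, norm_pow, Real.rpow_natCast, norm_pow, norm_norm])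
  rw [hnorm, eLpNorm_norm_rpow f (by positivity), ENNReal.ofReal_natCast, ENNReal.rpow_natCast]

theorem memLp_pow_iff {f : α → 𝕜} (hf : AEStronglyMeasurable f μ) {p : ℝ≥0∞} {k : ℕ}
    (hk : k ≠ 0) : MemLp (f ^ k) p μ ↔ MemLp f (p * k) μ := by
  simp only [MemLp, hf, hf.pow k, true_and, eLpNorm_pow f p hk, ENNReal.pow_lt_top_iff, hk,
    or_false]

end PowNorm

namespace IsMajorant

variable {F f : Circle2Pi → ℂ}

theorem norm_fourierCoeff_le (hmaj : IsMajorant F f) (n : ℤ) :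
    ‖fourierCoeff f n‖ ≤ ‖fourierCoeff F n‖ :=
  (hmaj n).2.trans (Complex.re_le_norm _)

theorem memLp_two (hmaj : IsMajorant F f) (hf : Integrable f circleMeasure)
    (hF : MemLp F 2 circleMeasure) : MemLp f 2 circleMeasure :=
  memLp_two_of_summable_sq_norm_fourierCoeff hf <|
    hF.hasSum_sq_norm_fourierCoeff.summable.of_nonneg_of_le (fun _ => by positivity)
      fun n => pow_le_pow_left₀ (norm_nonneg _) (hmaj.norm_fourierCoeff_le n) 2

theorem eLpNorm_two_le (hmaj : IsMajorant F f) (hf : MemLp f 2 circleMeasure)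
    (hF : MemLp F 2 circleMeasure) : eLpNorm f 2 circleMeasure ≤ eLpNorm F 2 circleMeasure := by
  have hsq := hasSum_le
    (fun n => pow_le_pow_left₀ (norm_nonneg _) (hmaj.norm_fourierCoeff_le n) 2)
    hf.hasSum_sq_norm_fourierCoeff hF.hasSum_sq_norm_fourierCoeff
  rwa [pow_le_pow_iff_left₀ ENNReal.toReal_nonneg ENNReal.toReal_nonneg two_ne_zero,
    ENNReal.toReal_le_toReal hf.eLpNorm_ne_top hF.eLpNorm_ne_top] at hsq

theorem fourierCoeff_eq_re (hmaj : IsMajorant F f) (n : ℤ) :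
    fourierCoeff F n = (fourierCoeff F n).re :=
  Complex.ext rfl (hmaj n).1

/-- The coefficients of a product are the convolutions of the coefficients, and convolution
preserves coefficientwise domination by nonnegative sequences. -/
theorem mul {G g : Circle2Pi → ℂ} (hmaj : IsMajorant F f) (hmaj' : IsMajorant G g)
    (hf : MemLp f 2 circleMeasure) (hg : MemLp g 2 circleMeasure)
    (hF : MemLp F 2 circleMeasure) (hG : MemLp G 2 circleMeasure) :
    IsMajorant (F * G) (f * g) := by
  intro n
  have hFG := hasSum_fourierCoeff_mul hF hG n
  have hreal : ∀ m, fourierCoeff F (n - m) * fourierCoeff G m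
      = (((fourierCoeff F (n - m)).re * (fourierCoeff G m).re : ℝ) : ℂ) := fun m => by
    rw [Complex.ofReal_mul, ← hmaj.fourierCoeff_eq_re, ← hmaj'.fourierCoeff_eq_re]
  simp only [hreal] at hFG
  refine ⟨by simpa using (Complex.hasSum_im hFG).unique hasSum_zero, ?_⟩
  refine (hasSum_fourierCoeff_mul hf hg n).norm_le_of_bounded
    (by simpa using Complex.hasSum_re hFG) fun m => ?_
  rw [norm_mul]
  exact mul_le_mul (hmaj (n - m)).2 (hmaj' m).2 (norm_nonneg _)
    ((norm_nonneg _).trans (hmaj (n - m)).2)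

theorem pow (hmaj : IsMajorant F f) (hf : Integrable f circleMeasure) {k : ℕ} (hk : k ≠ 0)
    (hF : MemLp F (2 * k) circleMeasure) :
    MemLp (f ^ k) 2 circleMeasure ∧ IsMajorant (F ^ k) (f ^ k) := by
  induction k with
  | zero => exact absurd rfl hk
  | succ k ih =>
    have hF2 : MemLp F 2 circleMeasure := hF.mono_exponent (by
      rw [Nat.cast_succ, mul_add_one]; exact le_add_self)
    have hf2 := hmaj.memLp_two hf hF2
    rcases eq_or_ne k 0 with rfl | hk0
    · simpa only [zero_add, pow_one] using ⟨hf2, hmaj⟩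
    have hFk : MemLp F (2 * k) circleMeasure := hF.mono_exponent (by gcongr; simp)
    obtain ⟨hfk, hmajk⟩ := ih hk0 hFk
    have hmaj_succ : IsMajorant (F ^ (k + 1)) (f ^ (k + 1)) := by
      simpa only [pow_succ] using hmajk.mul hmaj hfk hf2 ((memLp_pow_iff hF.1 hk0).2 hFk) hF2
    refine ⟨hmaj_succ.memLp_two ?_ ((memLp_pow_iff hF.1 hk).2 hF), hmaj_succ⟩
    rw [pow_succ]
    exact hfk.integrable_mul hf2

end IsMajorant

/-- upper majorant property with constant 1 in `L^{2j}`: if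
`F ∈ L^{2j}` majorizes an integrable `f`, then `f ∈ L^{2j}` and `‖f‖_{2j} ≤ ‖F‖_{2j}`. -/
theorem upper_majorant_property_even (j : ℕ) (hj : 1 ≤ j)
    (F : Circle2Pi → ℂ) (hF : MemLp F (2 * j : ℝ≥0∞) circleMeasure)
    (f : Circle2Pi → ℂ) (hf : Integrable f circleMeasure)
    (hmaj : IsMajorant F f) :
    MemLp f (2 * j : ℝ≥0∞) circleMeasure ∧
      eLpNorm f (2 * j : ℝ≥0∞) circleMeasure ≤ eLpNorm F (2 * j : ℝ≥0∞) circleMeasure := by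
  have hj0 : j ≠ 0 := Nat.one_le_iff_ne_zero.1 hj
  obtain ⟨hfj, hmajj⟩ := hmaj.pow hf hj0 hF
  have hle := hmajj.eLpNorm_two_le hfj ((memLp_pow_iff hF.1 hj0).2 hF)
  rw [eLpNorm_pow f 2 hj0, eLpNorm_pow F 2 hj0] at hle
  exact ⟨(memLp_pow_iff hf.1 hj0).1 hfj, (ENNReal.pow_le_pow_left_iff hj0).1 hle⟩
end
end

section
/- Let 1 < p < ∞ with conjugate exponent p', let c = (c_n)_{n∈ℤ} be a bounded sequence of complex numbers that is not identically zero, and suppose E ∈ L^p is a partial majorant of c. Then every trigonometric polynomial g in the class R(c) satisfies ‖g‖_{p'} ≥ 1/‖E‖_p; consequently K_p(c) ≥ 1/‖E‖_p > 0. -/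
/-! Pairing g ∈ R(c) with E: as ĝ ≥ 0 lives where c ≠ 0 and there Ê(n) ≥ |cₙ|, orthogonality of the
exponentials gives Re ∫ conj(g) E = ∑ ĝ(n) Re Ê(n) ≥ ∑ |cₙ| ĝ(n) = 1, while Hölder bounds
the left side by ‖g‖_{p'} ‖E‖_p. -/

open MeasureTheory Complex
open scoped Real ENNReal

noncomputable section

/-- `F` is a partial majorant of the sequence `c`: at every `n` with `c n ≠ 0`, the
Fourier coefficient `F̂(n)` is real and at least `|c n|`. -/
def IsPartialMajorant (c : ℤ → ℂ) (F : Circle2Pi → ℂ) : Prop :=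
  ∀ n : ℤ, c n ≠ 0 → (fourierCoeff F n).im = 0 ∧ ‖c n‖ ≤ (fourierCoeff F n).re

/-- A trigonometric polynomial: a finite linear combination of the exponentials `e^{inθ}`. -/
def IsTrigPoly (g : Circle2Pi → ℂ) : Prop :=
  ∃ (s : Finset ℤ) (a : ℤ → ℂ), ∀ x, g x = ∑ n ∈ s, a n * fourier n x

/-- The class `R(c)`: trigonometric polynomials with nonnegative real Fourier coefficients
vanishing off the support of `c`, normalized by `∑ₙ |cₙ| ĝ(n) = 1`. -/
def RClass (c : ℤ → ℂ) : Set (Circle2Pi → ℂ) :=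
  {g | IsTrigPoly g ∧
    (∀ n : ℤ, (fourierCoeff g n).im = 0 ∧ 0 ≤ (fourierCoeff g n).re) ∧
    (∀ n : ℤ, c n = 0 → fourierCoeff g n = 0) ∧
    ∑' n : ℤ, ‖c n‖ * (fourierCoeff g n).re = 1}

/-- `K_p(c)`, expressed in terms of the conjugate exponent `q = p'`:
the infimum of `‖g‖_q` over `g ∈ R(c)`. -/
def Kconst (c : ℤ → ℂ) (q : ℝ≥0∞) : ℝ≥0∞ :=
  ⨅ g ∈ RClass c, eLpNorm g q circleMeasure

open ComplexConjugate AddCircle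

section AddCircle

variable {T : ℝ} [Fact (0 < T)]

lemma fourierCoeff_sum_mul_fourier (s : Finset ℤ) (a : ℤ → ℂ) (m : ℤ) :
    fourierCoeff (fun x : AddCircle T => ∑ n ∈ s, a n * fourier n x) m
      = if m ∈ s then a m else 0 := by
  have hsum : (fun x : AddCircle T => ∑ n ∈ s, a n * fourier n x)
      = ∑ n ∈ s, fun x => a n * fourier n x :=
    (Finset.sum_fn s _).symm
  have hint (n : ℤ) : Integrable (fun x : AddCircle T => a n * fourier n x) haarAddCircle :=
    ((fourier n).continuous.integrable_of_hasCompactSupport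
      (.of_compactSpace _)).const_mul (a n)
  rw [hsum, fourierCoeff.sum _ _ fun n _ => hint n]
  simp only [Finset.sum_apply, fourierCoeff.const_mul, fourierCoeff_fourier, Pi.single_apply,
    mul_ite, mul_one, mul_zero, Finset.sum_ite_eq]

lemma integral_conj_sum_mul_fourier_mul (s : Finset ℤ) (a : ℤ → ℂ) {E : AddCircle T → ℂ}
    (hE : Integrable E haarAddCircle) :
    ∫ x, conj (∑ n ∈ s, a n * fourier n x) * E x ∂haarAddCircle
      = ∑ n ∈ s, conj (a n) * fourierCoeff E n := by
  have hterm : ∀ x, conj (∑ n ∈ s, a n * fourier n x) * E x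
      = ∑ n ∈ s, conj (a n) * (fourier (-n) x • E x) := by
    intro x
    simp only [map_sum, map_mul, Finset.sum_mul, fourier_neg, smul_eq_mul, mul_assoc]
  simp_rw [hterm]
  rw [integral_finsetSum _ fun n _ => (hE.fourier_smul (-n)).const_mul _]
  simp_rw [integral_const_mul, fourierCoeff]

end AddCircle

lemma enorm_integral_conj_mul_le {α : Type*} [MeasurableSpace α] {μ : Measure α}
    {p q : ℝ≥0∞} [p.HolderConjugate q] {f g : α → ℂ}
    (hf : AEStronglyMeasurable f μ) (hg : AEStronglyMeasurable g μ) :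
    ‖∫ x, conj (f x) * g x ∂μ‖ₑ ≤ eLpNorm f q μ * eLpNorm g p μ :=
  calc ‖∫ x, conj (f x) * g x ∂μ‖ₑ
      ≤ eLpNorm (conj f • g) 1 μ := by
        rw [eLpNorm_one_eq_lintegral_enorm]
        exact enorm_integral_le_lintegral_enorm _
    _ ≤ eLpNorm (conj f) q μ * eLpNorm g p μ :=
        eLpNorm_smul_le_mul_eLpNorm hg (continuous_conj.comp_aestronglyMeasurable hf)
    _ = eLpNorm f q μ * eLpNorm g p μ := by rw [eLpNorm_conj]

lemma IsTrigPoly.exists_eq_sum_fourierCoeff {g : Circle2Pi → ℂ} (hg : IsTrigPoly g) :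
    ∃ s : Finset ℤ, (∀ x, g x = ∑ n ∈ s, fourierCoeff g n * fourier n x) ∧
      ∀ n ∉ s, fourierCoeff g n = 0 := by
  obtain ⟨s, a, hga⟩ := hg
  have hcoeff (m : ℤ) : fourierCoeff g m = if m ∈ s then a m else 0 := by
    rw [show g = _ from funext hga, fourierCoeff_sum_mul_fourier]
  refine ⟨s, fun x => ?_, fun n hn => by rw [hcoeff, if_neg hn]⟩
  rw [hga x]
  exact Finset.sum_congr rfl fun n hn => by rw [hcoeff, if_pos hn]

lemma IsTrigPoly.continuous {g : Circle2Pi → ℂ} (hg : IsTrigPoly g) : Continuous g := by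
  obtain ⟨s, a, hga⟩ := hg
  rw [show g = _ from funext hga]
  exact continuous_finsetSum _ fun n _ => continuous_const.mul (fourier n).continuous

lemma one_le_re_integral_conj_mul_of_mem_RClass {c : ℤ → ℂ} {E g : Circle2Pi → ℂ}
    (hE : Integrable E circleMeasure) (hEpm : IsPartialMajorant c E) (hg : g ∈ RClass c) :
    1 ≤ (∫ x, conj (g x) * E x ∂circleMeasure).re := by
  obtain ⟨htrig, hreal, hvanish, hnormalized⟩ := hg
  obtain ⟨s, hgs, hsupp⟩ := htrig.exists_eq_sum_fourierCoeff
  have hterm (n : ℤ) :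
      ‖c n‖ * (fourierCoeff g n).re ≤ (conj (fourierCoeff g n) * fourierCoeff E n).re := by
    by_cases hcn : c n = 0
    · simp [hcn, hvanish n hcn]
    rw [mul_re, conj_re, conj_im, (hreal n).1, neg_zero, zero_mul, sub_zero,
      mul_comm (fourierCoeff g n).re]
    exact mul_le_mul_of_nonneg_right (hEpm n hcn).2 (hreal n).2
  calc (1 : ℝ) = ∑ n ∈ s, ‖c n‖ * (fourierCoeff g n).re := by
        rw [← hnormalized, tsum_eq_sum fun n hn => by rw [hsupp n hn, zero_re, mul_zero]]
    _ ≤ ∑ n ∈ s, (conj (fourierCoeff g n) * fourierCoeff E n).re :=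
        Finset.sum_le_sum fun n _ => hterm n
    _ = (∫ x, conj (g x) * E x ∂circleMeasure).re := by
        simp_rw [hgs, integral_conj_sum_mul_fourier_mul _ _ hE, re_sum]

lemma one_div_eLpNorm_le_eLpNorm_of_mem_RClass {p q : ℝ≥0∞} [p.HolderConjugate q]
    {c : ℤ → ℂ} {E g : Circle2Pi → ℂ} (hE : MemLp E p circleMeasure)
    (hEpm : IsPartialMajorant c E) (hg : g ∈ RClass c) :
    1 / eLpNorm E p circleMeasure ≤ eLpNorm g q circleMeasure := by
  refine ENNReal.div_le_of_le_mul ?_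
  have hE1 : Integrable E circleMeasure := hE.integrable (ENNReal.HolderConjugate.one_le p q)
  calc (1 : ℝ≥0∞) = ENNReal.ofReal 1 := ENNReal.ofReal_one.symm
    _ ≤ ENNReal.ofReal (∫ x, conj (g x) * E x ∂circleMeasure).re :=
        ENNReal.ofReal_le_ofReal (one_le_re_integral_conj_mul_of_mem_RClass hE1 hEpm hg)
    _ ≤ ‖∫ x, conj (g x) * E x ∂circleMeasure‖ₑ := by
        rw [← ofReal_norm]
        exact ENNReal.ofReal_le_ofReal (re_le_norm _)
    _ ≤ eLpNorm g q circleMeasure * eLpNorm E p circleMeasure :=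
        enorm_integral_conj_mul_le hg.1.continuous.aestronglyMeasurable hE.1

theorem Kconst_lower_bound_general (p q : ℝ≥0∞)
    (hpq : 1 / p + 1 / q = 1)
    (c : ℤ → ℂ)
    (E : Circle2Pi → ℂ) (hE : MemLp E p circleMeasure)
    (hEpm : IsPartialMajorant c E) :
    (∀ g ∈ RClass c, 1 / eLpNorm E p circleMeasure ≤ eLpNorm g q circleMeasure) ∧
    1 / eLpNorm E p circleMeasure ≤ Kconst c q ∧ 0 < Kconst c q := by
  have : p.HolderConjugate q := ENNReal.holderConjugate_iff.mpr (by simpa only [one_div] using hpq)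
  have hRClass (g : Circle2Pi → ℂ) (hg : g ∈ RClass c) :
      1 / eLpNorm E p circleMeasure ≤ eLpNorm g q circleMeasure :=
    one_div_eLpNorm_le_eLpNorm_of_mem_RClass hE hEpm hg
  have hK : 1 / eLpNorm E p circleMeasure ≤ Kconst c q := le_iInf₂ hRClass
  exact ⟨hRClass, hK, (ENNReal.div_pos one_ne_zero hE.eLpNorm_ne_top).trans_le hK⟩

/-- if `E ∈ L^p` is a partial majorant of a nontrivial bounded sequence `c`,
then every `g ∈ R(c)` satisfies `‖g‖_{p'} ≥ 1/‖E‖_p`, so `K_p(c) ≥ 1/‖E‖_p > 0`. -/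
theorem Kconst_lower_bound (p q : ℝ≥0∞) (hp1 : 1 < p) (hp2 : p < ∞)
    (hpq : 1 / p + 1 / q = 1)
    (c : ℤ → ℂ) (hbdd : ∃ M : ℝ, ∀ n : ℤ, ‖c n‖ ≤ M)
    (hc0 : ∃ n : ℤ, c n ≠ 0)
    (E : Circle2Pi → ℂ) (hE : MemLp E p circleMeasure)
    (hEpm : IsPartialMajorant c E) :
    (∀ g ∈ RClass c, 1 / eLpNorm E p circleMeasure ≤ eLpNorm g q circleMeasure) ∧
    1 / eLpNorm E p circleMeasure ≤ Kconst c q ∧ 0 < Kconst c q :=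
  Kconst_lower_bound_general p q hpq c E hE hEpm
end
end

section
/- Let j be an integer with j > 1 and let p = 2j/(2j-1). If f is a nonzero function in L^p and c = (c_n)_{n∈ℤ} is a bounded sequence with |c_n| ≤ |f̂(n)| for all n ∈ ℤ, then K_p(c) ≥ 1/‖f‖_p. -/
open MeasureTheory Complex
open scoped Real ENNReal

noncomputable section

/-!
Take `g ∈ R(c)` and twist its (nonnegative) coefficients by the phases of `f̂`:
`h := ∑ₙ ĝ(n) (f̂(n) / |f̂(n)|) eₙ`. Then `∫ f h̄ = ∑ₙ |f̂(n)| ĝ(n) ≥ ∑ₙ |cₙ| ĝ(n) = 1`, so Hölder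
gives `1 ≤ ‖f‖_p ‖h‖_{2j}`. Since `|ĥ| ≤ ĝ` coefficientwise and products of the nonnegative
coefficients of `g` never cancel, also `|(h^j)^| ≤ (g^j)^`, and Parseval applied to
`‖h‖_{2j}^j = ‖h^j‖_2` yields `‖h‖_{2j} ≤ ‖g‖_{2j}`.
-/

open scoped ComplexConjugate ComplexOrder

lemma ENNReal.holderConjugate_div_sub_one {q : ℝ≥0∞} (hq : 1 < q) (hq' : q ≠ ∞) :
    (q / (q - 1)).HolderConjugate q := by
  have hq1 : q - 1 ≠ 0 := (tsub_pos_of_lt hq).ne'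
  have hq1' : q - 1 ≠ ∞ := ENNReal.sub_ne_top hq'
  have : q / (q - 1) = ENNReal.conjExponent q := by
    nth_rw 1 [← tsub_add_cancel_of_le hq.le]
    rw [ENNReal.add_div, ENNReal.div_self hq1 hq1', one_div, ENNReal.conjExponent]
  rw [this]
  exact (ENNReal.HolderConjugate.conjExponent hq.le).symm

lemma Complex.conj_div_norm_mul_self (z : ℂ) : conj (z / ‖z‖) * z = ‖z‖ := by
  rcases eq_or_ne z 0 with rfl | hz
  · simp
  rw [map_div₀, Complex.conj_ofReal, div_mul_eq_mul_div, Complex.conj_mul', sq,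
    mul_div_assoc, div_self (by simpa using hz), mul_one]

lemma MeasureTheory.enorm_integral_mul_conj_le {α : Type*} [MeasurableSpace α] {μ : Measure α}
    {p q : ℝ≥0∞} [p.HolderConjugate q] {f g : α → ℂ} (hf : AEStronglyMeasurable f μ)
    (hg : AEStronglyMeasurable g μ) :
    ‖∫ x, f x * conj (g x) ∂μ‖ₑ ≤ eLpNorm f p μ * eLpNorm g q μ := by
  calc ‖∫ x, f x * conj (g x) ∂μ‖ₑ ≤ eLpNorm (fun x => f x * conj (g x)) 1 μ := by
        rw [eLpNorm_one_eq_lintegral_enorm]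
        exact enorm_integral_le_lintegral_enorm _
    _ ≤ eLpNorm f p μ * eLpNorm g q μ := by
        simpa using eLpNorm_le_eLpNorm_mul_eLpNorm'_of_norm hf hg (fun z w => z * conj w) 1
          (.of_forall fun x => by simp)

namespace AddMonoidAlgebra

variable {G : Type*}

/-- `|a_g| ≤ b_g` for all `g`, read in `ComplexOrder`: in particular every coefficient of `b` is
real and nonnegative. -/
def Majorizes (b a : AddMonoidAlgebra ℂ G) : Prop :=
  ∀ g, (‖a.coeff g‖ : ℂ) ≤ b.coeff g

namespace Majorizes

variable {a b a' b' : AddMonoidAlgebra ℂ G}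

lemma nonneg (h : Majorizes b a) (g : G) : 0 ≤ b.coeff g :=
  le_trans (by simp) (h g)

lemma norm_le (h : Majorizes b a) (g : G) : ‖a.coeff g‖ ≤ ‖b.coeff g‖ := by
  have := h g
  rw [← Complex.norm_of_nonneg' (h.nonneg g)] at this
  exact_mod_cast this

lemma support_subset (h : Majorizes b a) : a.coeff.support ⊆ b.coeff.support := fun g hg => by
  simpa using (norm_pos_iff.mpr (Finsupp.mem_support_iff.mp hg)).trans_le (h.norm_le g)

lemma one [AddZeroClass G] : Majorizes (1 : AddMonoidAlgebra ℂ G) 1 := fun g => by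
  classical
  simp only [one_def, coeff_single, Finsupp.single_apply]
  split_ifs <;> simp

lemma mul [AddGroup G] (h : Majorizes b a) (h' : Majorizes b' a') :
    Majorizes (b * b') (a * a') := fun g => by
  rw [coeff_mul_apply_left, coeff_mul_apply_left,
    Finsupp.sum_of_support_subset _ h.support_subset (fun k r => r * a'.coeff (-k + g))
      (fun _ _ => zero_mul _)]
  calc (‖∑ k ∈ b.coeff.support, a.coeff k * a'.coeff (-k + g)‖ : ℂ)
      ≤ ((∑ k ∈ b.coeff.support, ‖a.coeff k‖ * ‖a'.coeff (-k + g)‖ : ℝ) : ℂ) := by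
        exact_mod_cast (norm_sum_le _ _).trans_eq (by simp only [norm_mul])
    _ ≤ ∑ k ∈ b.coeff.support, b.coeff k * b'.coeff (-k + g) := by
        push_cast
        exact Finset.sum_le_sum fun k _ => mul_le_mul (h k) (h' _) (by simp) (h.nonneg k)

lemma pow [AddGroup G] (h : Majorizes b a) (j : ℕ) : Majorizes (b ^ j) (a ^ j) := by
  induction j with
  | zero => simpa using one
  | succ j ih => simpa only [pow_succ] using ih.mul h

end Majorizes

end AddMonoidAlgebra

namespace AddCircle

variable {T : ℝ}

def fourierPoly (T : ℝ) : AddMonoidAlgebra ℂ ℤ →ₐ[ℂ] C(AddCircle T, ℂ) :=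
  AddMonoidAlgebra.lift ℂ C(AddCircle T, ℂ) ℤ
    { toFun := fun n => fourier n.toAdd
      map_one' := by ext; exact fourier_zero
      map_mul' := fun _ _ => by ext; exact fourier_add }

lemma fourierPoly_single (n : ℤ) (z : ℂ) :
    fourierPoly T (AddMonoidAlgebra.single n z) = z • fourier n :=
  AddMonoidAlgebra.lift_single _ _ _

lemma fourierPoly_eq_sum (a : AddMonoidAlgebra ℂ ℤ) :
    ⇑(fourierPoly T a) = ∑ n ∈ a.coeff.support, a.coeff n • ⇑(fourier (T := T) n) := by
  simp [fourierPoly, AddMonoidAlgebra.lift_apply, Finsupp.sum]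

lemma fourierPoly_apply (a : AddMonoidAlgebra ℂ ℤ) (x : AddCircle T) :
    fourierPoly T a x = ∑ n ∈ a.coeff.support, a.coeff n * fourier n x := by
  simp [fourierPoly_eq_sum]

variable [Fact (0 < T)]

lemma memLp_continuousMap (F : C(AddCircle T, ℂ)) (p : ℝ≥0∞) : MemLp F p haarAddCircle :=
  F.continuous.memLp_of_hasCompactSupport (.of_compactSpace _)

lemma fourierCoeff_fourierPoly (a : AddMonoidAlgebra ℂ ℤ) :
    fourierCoeff (fourierPoly T a) = a.coeff := by
  ext m
  rw [fourierPoly_eq_sum, fourierCoeff.sum]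
  · simp [fourierCoeff.const_smul, fourierCoeff_fourier, Pi.single_apply, eq_comm]
  · exact fun n _ => ((memLp_continuousMap _ 1).integrable le_rfl).const_mul _

lemma hasSum_norm_coeff_sq (a : AddMonoidAlgebra ℂ ℤ) :
    HasSum (fun n => ‖a.coeff n‖ ^ 2) (∫ x, ‖fourierPoly T a x‖ ^ 2 ∂haarAddCircle) := by
  have h := hasSum_sq_fourierCoeff
    (ContinuousMap.toLp (E := ℂ) 2 haarAddCircle ℂ (fourierPoly T a))
  simp only [fourierCoeff_toLp, fourierCoeff_fourierPoly] at h
  convert h using 1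
  refine integral_congr_ae ?_
  filter_upwards [ContinuousMap.coeFn_toLp (E := ℂ) (p := 2) (𝕜 := ℂ) haarAddCircle
    (fourierPoly T a)] with x hx
  rw [hx]

lemma eLpNorm_fourierPoly_two_le {a b : AddMonoidAlgebra ℂ ℤ}
    (h : ∀ n, ‖a.coeff n‖ ≤ ‖b.coeff n‖) :
    eLpNorm (fourierPoly T a) 2 haarAddCircle ≤ eLpNorm (fourierPoly T b) 2 haarAddCircle := by
  rw [(memLp_continuousMap _ 2).eLpNorm_eq_integral_rpow_norm two_ne_zero ENNReal.ofNat_ne_top,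
    (memLp_continuousMap _ 2).eLpNorm_eq_integral_rpow_norm two_ne_zero ENNReal.ofNat_ne_top]
  refine ENNReal.ofReal_le_ofReal (Real.rpow_le_rpow (by positivity) ?_ (by positivity))
  simp only [ENNReal.toReal_ofNat, Real.rpow_two]
  exact hasSum_le (fun n => by gcongr; exact h n) (hasSum_norm_coeff_sq a)
    (hasSum_norm_coeff_sq b)

lemma eLpNorm_fourierPoly_pow (a : AddMonoidAlgebra ℂ ℤ) {j : ℕ} (hj : j ≠ 0) :
    eLpNorm (fourierPoly T (a ^ j)) 2 haarAddCircle =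
      eLpNorm (fourierPoly T a) (2 * j) haarAddCircle ^ (j : ℝ) := by
  have hnorm : ∀ x, ‖fourierPoly T (a ^ j) x‖ = ‖‖fourierPoly T a x‖ ^ (j : ℝ)‖ := fun x => by
    simp [map_pow, Real.rpow_natCast]
  rw [eLpNorm_congr_norm_ae (.of_forall hnorm),
    eLpNorm_norm_rpow _ (by exact_mod_cast Nat.pos_of_ne_zero hj), ENNReal.ofReal_natCast]

lemma _root_.AddMonoidAlgebra.Majorizes.eLpNorm_fourierPoly_le {a b : AddMonoidAlgebra ℂ ℤ}
    (h : b.Majorizes a) (j : ℕ) :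
    eLpNorm (fourierPoly T a) (2 * j) haarAddCircle ≤
      eLpNorm (fourierPoly T b) (2 * j) haarAddCircle := by
  rcases eq_or_ne j 0 with rfl | hj
  · simp
  rw [← ENNReal.rpow_le_rpow_iff (z := (j : ℝ)) (by exact_mod_cast Nat.pos_of_ne_zero hj),
    ← eLpNorm_fourierPoly_pow a hj, ← eLpNorm_fourierPoly_pow b hj]
  exact eLpNorm_fourierPoly_two_le (h.pow j).norm_le

lemma integral_mul_conj_fourierPoly {f : AddCircle T → ℂ} (hf : Integrable f haarAddCircle)
    (a : AddMonoidAlgebra ℂ ℤ) :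
    ∫ x, f x * conj (fourierPoly T a x) ∂haarAddCircle =
      ∑ n ∈ a.coeff.support, conj (a.coeff n) * fourierCoeff f n := by
  simp_rw [fourierPoly_apply, map_sum, Finset.mul_sum, map_mul, ← fourier_neg]
  rw [integral_finsetSum]
  · refine Finset.sum_congr rfl fun n _ => ?_
    simp_rw [mul_left_comm (f _), integral_const_mul, fourierCoeff, smul_eq_mul, mul_comm (f _)]
  · exact fun n _ => ((hf.fourier_smul (-n)).const_mul (conj (a.coeff n))).congr
      (.of_forall fun x => by simp only [smul_eq_mul]; ring)

lemma exists_majorizes_integral_mul_conj_eq {f : AddCircle T → ℂ}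
    (hf : Integrable f haarAddCircle) {A : AddMonoidAlgebra ℂ ℤ} (hA : ∀ n, 0 ≤ A.coeff n) :
    ∃ H : AddMonoidAlgebra ℂ ℤ, A.Majorizes H ∧
      ∫ x, f x * conj (fourierPoly T H x) ∂haarAddCircle =
        ∑ n ∈ A.coeff.support, ‖fourierCoeff f n‖ * A.coeff n := by
  -- the phase of `f̂ n`; it is `0` where `f̂ n = 0`, which costs nothing
  set u : ℤ → ℂ := fun n => fourierCoeff f n / ‖fourierCoeff f n‖
  have hu : ∀ n, ‖u n‖ ≤ 1 := fun n => by
    simpa [u, norm_div] using div_self_le_one ‖fourierCoeff f n‖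
  have hAconj : ∀ n, conj (A.coeff n) = A.coeff n := fun n =>
    Complex.conj_eq_iff_im.mpr (Complex.nonneg_iff.mp (hA n)).2.symm
  let H : AddMonoidAlgebra ℂ ℤ := AddMonoidAlgebra.ofCoeff (u • A.coeff)
  have hH : ∀ n, H.coeff n = u n * A.coeff n := fun n => rfl
  have hmaj : A.Majorizes H := fun n => by
    rw [hH, norm_mul]
    exact (Complex.real_le_real.mpr (mul_le_of_le_one_left (norm_nonneg _) (hu n))).trans_eq
      (Complex.norm_of_nonneg' (hA n))
  refine ⟨H, hmaj, ?_⟩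
  rw [integral_mul_conj_fourierPoly hf]
  refine Finset.sum_subset hmaj.support_subset (fun n _ hn => by
    simp [Finsupp.notMem_support_iff.mp hn]) |>.trans (Finset.sum_congr rfl fun n _ => ?_)
  rw [hH, map_mul, hAconj, mul_comm (conj (u n)), mul_assoc, Complex.conj_div_norm_mul_self,
    mul_comm]

end AddCircle

open AddCircle

lemma IsTrigPoly.exists_eq_fourierPoly {g : Circle2Pi → ℂ} (hg : IsTrigPoly g) :
    ∃ A : AddMonoidAlgebra ℂ ℤ, g = fourierPoly (2 * π) A := by
  obtain ⟨s, a, hga⟩ := hg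
  refine ⟨∑ n ∈ s, AddMonoidAlgebra.single n (a n), funext fun x => ?_⟩
  simp only [hga, map_sum, fourierPoly_single, ContinuousMap.coe_sum, Finset.sum_apply,
    ContinuousMap.coe_smul, Pi.smul_apply, smul_eq_mul]

lemma one_le_eLpNorm_mul_eLpNorm_of_mem_RClass {p : ℝ≥0∞} {j : ℕ}
    [p.HolderConjugate (2 * j)] {f : Circle2Pi → ℂ} (hf : MemLp f p circleMeasure) {c : ℤ → ℂ}
    (hcf : ∀ n, ‖c n‖ ≤ ‖fourierCoeff f n‖) {g : Circle2Pi → ℂ} (hg : g ∈ RClass c) :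
    1 ≤ eLpNorm f p circleMeasure * eLpNorm g (2 * j) circleMeasure := by
  obtain ⟨hpoly, hpos, -, hnorm⟩ := hg
  obtain ⟨A, rfl⟩ := hpoly.exists_eq_fourierPoly
  rw [fourierCoeff_fourierPoly] at hpos hnorm
  have hA : ∀ n, 0 ≤ A.coeff n := fun n => Complex.nonneg_iff.mpr ⟨(hpos n).2, (hpos n).1.symm⟩
  obtain ⟨H, hmaj, hpair⟩ := exists_majorizes_integral_mul_conj_eq
    (hf.integrable (ENNReal.HolderConjugate.one_le p (2 * j))) hA
  have hsum : 1 ≤ ‖∑ n ∈ A.coeff.support, ‖fourierCoeff f n‖ * A.coeff n‖ := by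
    calc (1 : ℝ) = ∑ n ∈ A.coeff.support, ‖c n‖ * (A.coeff n).re := by
          rw [← hnorm, tsum_eq_sum fun n hn => by rw [Finsupp.notMem_support_iff.mp hn]; simp]
      _ ≤ ∑ n ∈ A.coeff.support, ‖fourierCoeff f n‖ * (A.coeff n).re :=
          Finset.sum_le_sum fun n _ => mul_le_mul_of_nonneg_right (hcf n) (hpos n).2
      _ = (∑ n ∈ A.coeff.support, ‖fourierCoeff f n‖ * A.coeff n).re := by
          simp [Complex.re_sum]
      _ ≤ _ := Complex.re_le_norm _
  calc 1 ≤ ‖∫ x, f x * conj (fourierPoly (2 * π) H x) ∂circleMeasure‖ₑ := by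
        rw [hpair, ← ofReal_norm]
        exact ENNReal.one_le_ofReal.mpr hsum
    _ ≤ eLpNorm f p circleMeasure * eLpNorm (fourierPoly (2 * π) H) (2 * j) circleMeasure :=
        enorm_integral_mul_conj_le hf.1 (map_continuous _).aestronglyMeasurable
    _ ≤ eLpNorm f p circleMeasure * eLpNorm (fourierPoly (2 * π) A) (2 * j) circleMeasure := by
        gcongr
        exact hmaj.eLpNorm_fourierPoly_le j

theorem Kconst_ge_inv_norm_general (j : ℕ) (hj : 1 < j)
    (p : ℝ≥0∞) (hp : p = (2 * j : ℝ≥0∞) / (2 * j - 1))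
    (f : Circle2Pi → ℂ) (hf : MemLp f p circleMeasure)
    (c : ℤ → ℂ)
    (hcf : ∀ n : ℤ, ‖c n‖ ≤ ‖fourierCoeff f n‖) :
    1 / eLpNorm f p circleMeasure ≤ Kconst c (2 * j : ℝ≥0∞) := by
  have hpq : p.HolderConjugate (2 * j) := hp ▸ ENNReal.holderConjugate_div_sub_one
    (by norm_cast; omega) (by norm_cast; exact ENNReal.natCast_ne_top _)
  refine le_iInf₂ fun g hg => ENNReal.div_le_of_le_mul ?_
  rw [mul_comm]
  exact one_le_eLpNorm_mul_eLpNorm_of_mem_RClass hf hcf hg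

/-- for `p = 2j/(2j-1)` with integer `j > 1` (so `p' = 2j`), if `f ∈ L^p`
is nonzero and `|c n| ≤ |f̂(n)|` for all `n`, then `K_p(c) ≥ 1/‖f‖_p`. -/
theorem Kconst_ge_inv_norm (j : ℕ) (hj : 1 < j)
    (p : ℝ≥0∞) (hp : p = (2 * j : ℝ≥0∞) / (2 * j - 1))
    (f : Circle2Pi → ℂ) (hf : MemLp f p circleMeasure)
    (hf0 : ¬ f =ᵐ[circleMeasure] 0)
    (c : ℤ → ℂ) (hbdd : ∃ M : ℝ, ∀ n : ℤ, ‖c n‖ ≤ M)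
    (hcf : ∀ n : ℤ, ‖c n‖ ≤ ‖fourierCoeff f n‖) :
    1 / eLpNorm f p circleMeasure ≤ Kconst c (2 * j : ℝ≥0∞) :=
  Kconst_ge_inv_norm_general j hj p hp f hf c hcf
end
end
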